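/- arXiv:2509.03967 — 6 statements merged into one kernel-verified Lean document; each statement's English description precedes it below -/
import Mathlib

section
/- For every finite simple graph G on n vertices and all integers q, q' with 0 ≤ q ≤ q' ≤ n, one has Z_+(G) = Z_0(G), Z_q(G) ≤ Z_{q'}(G), and Z_n(G) = Z(G). -/
namespace ZqForcing

variable {V : Type*}

/-- `u` forces `v` within the allowed vertex set `A`, given the filled set `F`:
`u` is filled, `v` is its unique unfilled neighbor inside `A`. -/
def forceIn (G : SimpleGraph V) (A F : Set V) (u v : V) : Prop :=
  u ∈ A ∧ v ∈ A ∧ u ∈ F ∧ v ∉ F ∧ G.Adj u v ∧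
    ∀ w ∈ A, G.Adj u w → w ∉ F → w = v

/-- One step of the standard zero forcing color change rule. -/
def zfStep (G : SimpleGraph V) (F F' : Set V) : Prop :=
  ∃ u v, forceIn G Set.univ F u v ∧ F' = insert v F

/-- `S` is a zero forcing set: repeated color changes fill all of `V`. -/
def IsZeroForcingSet (G : SimpleGraph V) (S : Set V) : Prop :=
  Relation.ReflTransGen (zfStep G) S Set.univ

/-- The zero forcing number `Z(G)`. -/
noncomputable def zeroForcingNumber (G : SimpleGraph V) : ℕ :=
  sInf {n | ∃ S : Set V, S.ncard = n ∧ IsZeroForcingSet G S}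

/-- Reachability in `G - F`, i.e. through vertices avoiding `F`. -/
def reachAvoid (G : SimpleGraph V) (F : Set V) : V → V → Prop :=
  Relation.ReflTransGen (fun a b => G.Adj a b ∧ a ∉ F ∧ b ∉ F)

/-- The positive semidefinite color change rule: filled `u` forces unfilled `v` when `v`
is the unique neighbor of `u` in the connected component of `G - F` containing `v`. -/
def psdForce (G : SimpleGraph V) (F : Set V) (u v : V) : Prop :=
  u ∈ F ∧ v ∉ F ∧ G.Adj u v ∧
    ∀ w, G.Adj u w → w ∉ F → reachAvoid G F v w → w = v

/-- One step of the positive semidefinite color change rule. -/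
def psdStep (G : SimpleGraph V) (F F' : Set V) : Prop :=
  ∃ u v, psdForce G F u v ∧ F' = insert v F

/-- `S` is a positive semidefinite zero forcing set. -/
def IsPSDForcingSet (G : SimpleGraph V) (S : Set V) : Prop :=
  Relation.ReflTransGen (psdStep G) S Set.univ

/-- The positive semidefinite zero forcing number `Z₊(G)`. -/
noncomputable def psdZeroForcingNumber (G : SimpleGraph V) : ℕ :=
  sInf {n | ∃ S : Set V, S.ncard = n ∧ IsPSDForcingSet G S}

/-- The vertex sets of the connected components of the subgraph induced on
the unfilled vertices. -/
def unfilledComponents (G : SimpleGraph V) (F : Set V) : Set (Set V) :=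
  {C | ∃ v, v ∉ F ∧ C = {w | reachAvoid G F v w}}

/-- A forcing step performed inside the induced subgraph on the vertex set `A`. -/
def rule3Step (G : SimpleGraph V) (A F F' : Set V) : Prop :=
  ∃ u v, forceIn G A F u v ∧ F' = insert v F

/-- `ZqWinFrom G q F t`: starting from the filled set `F`, the player can guarantee to
fill all vertices using at most `t` further tokens against every oracle strategy, in the
`q`-analogue zero forcing game. -/
inductive ZqWinFrom (G : SimpleGraph V) (q : ℕ) : Set V → ℕ → Prop
  | done (t : ℕ) : ZqWinFrom G q Set.univ t
  | rule1 {F : Set V} {t : ℕ} (v : V) (hv : v ∉ F)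
      (h : ZqWinFrom G q (insert v F) t) : ZqWinFrom G q F (t + 1)
  | rule2 {F : Set V} {t : ℕ} (u v : V) (huv : forceIn G Set.univ F u v)
      (h : ZqWinFrom G q (insert v F) t) : ZqWinFrom G q F t
  | rule3 {F : Set V} {t : ℕ} (𝒞 : Set (Set V))
      (h𝒞 : 𝒞 ⊆ unfilledComponents G F) (hcard : q + 1 ≤ 𝒞.ncard)
      (next : ∀ 𝒮 : Set (Set V), 𝒮 ⊆ 𝒞 → 𝒮.Nonempty → Set V)
      (hnext : ∀ (𝒮 : Set (Set V)) (h1 : 𝒮 ⊆ 𝒞) (h2 : 𝒮.Nonempty),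
        Relation.ReflTransGen (rule3Step G (F ∪ ⋃₀ 𝒮)) F (next 𝒮 h1 h2))
      (h : ∀ (𝒮 : Set (Set V)) (h1 : 𝒮 ⊆ 𝒞) (h2 : 𝒮.Nonempty),
        ZqWinFrom G q (next 𝒮 h1 h2) t) :
      ZqWinFrom G q F t

/-- The `q`-analogue zero forcing number `Z_q(G)`. -/
noncomputable def qZeroForcingNumber (G : SimpleGraph V) (q : ℕ) : ℕ :=
  sInf {t | ZqWinFrom G q ∅ t}

/-- The induced subgraph on `B` is connected and has no cut vertex. -/
def NoCutVertex (G : SimpleGraph V) (B : Set V) : Prop :=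
  (G.induce B).Connected ∧
    ∀ v ∈ B, (B \ {v}).Nonempty → (G.induce (B \ {v})).Connected

/-- `B` is a block of `G`: a maximal (vertex set of a) connected subgraph without
a cut vertex. -/
def IsBlock (G : SimpleGraph V) (B : Set V) : Prop :=
  NoCutVertex G B ∧ ∀ B' : Set V, B ⊆ B' → NoCutVertex G B' → B' = B

/-- A block graph: a connected graph each of whose blocks is a clique. -/
def IsBlockGraph (G : SimpleGraph V) : Prop :=
  G.Connected ∧ ∀ B : Set V, IsBlock G B → G.IsClique B

/-- A cactus graph: connected, and every edge lies on at most one cycle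
(cycles being identified when they have the same edge set). -/
def IsCactus (G : SimpleGraph V) : Prop :=
  G.Connected ∧ ∀ (a b : V) (c : G.Walk a a) (d : G.Walk b b),
    c.IsCycle → d.IsCycle → ∀ e ∈ c.edges, e ∈ d.edges →
      ∀ e', e' ∈ c.edges ↔ e' ∈ d.edges

/-- `c` is an induced (chordless) cycle of `G`. -/
def IsInducedCycle (G : SimpleGraph V) {v : V} (c : G.Walk v v) : Prop :=
  c.IsCycle ∧ ∀ x ∈ c.support, ∀ y ∈ c.support, G.Adj x y → s(x, y) ∈ c.edges

/-- Generalized windmill graph of Type I: η disjoint copies of `K_k` together with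
`l` central vertices forming a clique, each central vertex adjacent to everything. -/
def windmillI (η k l : ℕ) : SimpleGraph ((Fin η × Fin k) ⊕ Fin l) :=
  SimpleGraph.fromRel (fun a b =>
    match a, b with
    | Sum.inl (i, _), Sum.inl (i', _) => i = i'
    | Sum.inr _, Sum.inr _ => True
    | _, _ => True)

/-- Generalized windmill graph of Type II: η disjoint copies of `K_k` together with
`l` pairwise nonadjacent central vertices, each adjacent to every clique vertex. -/
def windmillII (η k l : ℕ) : SimpleGraph ((Fin η × Fin k) ⊕ Fin l) :=
  SimpleGraph.fromRel (fun a b =>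
    match a, b with
    | Sum.inl (i, _), Sum.inl (i', _) => i = i'
    | Sum.inr _, Sum.inr _ => False
    | _, _ => True)

/-- Generalized star (spider) graph: a center `none` together with `k` disjoint paths,
the `i`-th of length `m i`, attached to the center at one endpoint. -/
def spider {k : ℕ} (m : Fin k → ℕ) : SimpleGraph (Option (Σ i : Fin k, Fin (m i))) :=
  SimpleGraph.fromRel (fun a b =>
    match a, b with
    | none, some ⟨_, j⟩ => j.val = 0
    | some ⟨i, j⟩, some ⟨i', j'⟩ => i = i' ∧ j.val + 1 = j'.val
    | _, _ => False)

/-! The three claims compare winning strategies of the game with forcing processes.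
Lowering `q` only relaxes the side condition of Rule 3, so `Z_q` is monotone in `q`.
When `q ≥ |V|` Rule 3 can never be played, since there are at most `|V|` unfilled
components, and a strategy is just a choice of tokens followed by color changes. For
`q = 0`, a positive semidefinite force of `u` on `v` is Rule 3 played on the single
component of `v`; conversely, if the oracle always returns every selected component, each
forcing step of Rule 3 is a positive semidefinite force in `G`. -/

section Forcing

variable {G : SimpleGraph V} {F F' : Set V} {u v : V}

lemma reachAvoid_anti (hF : F ⊆ F') {a b : V} (h : reachAvoid G F' a b) :
    reachAvoid G F a b :=
  Relation.ReflTransGen.mono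
    (fun _ _ hab => ⟨hab.1, fun ha => hab.2.1 (hF ha), fun hb => hab.2.2 (hF hb)⟩) a b h

lemma forceIn_univ_of_subset (h : forceIn G Set.univ F u v) (hF : F ⊆ F') (hv : v ∉ F') :
    forceIn G Set.univ F' u v := by
  obtain ⟨-, -, hu, -, hadj, huniq⟩ := h
  exact ⟨trivial, trivial, hF hu, hv, hadj, fun w _ huw hw => huniq w trivial huw (hw <| hF ·)⟩

lemma psdForce_of_subset (h : psdForce G F u v) (hF : F ⊆ F') (hv : v ∉ F') :
    psdForce G F' u v := by
  obtain ⟨hu, -, hadj, huniq⟩ := h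
  exact ⟨hF hu, hv, hadj,
    fun w huw hw hvw => huniq w huw (hw <| hF ·) (reachAvoid_anti hF hvw)⟩

lemma psdForce_of_forceIn_univ (h : forceIn G Set.univ F u v) : psdForce G F u v :=
  ⟨h.2.2.1, h.2.2.2.1, h.2.2.2.2.1, fun w huw hw _ => h.2.2.2.2.2 w trivial huw hw⟩

lemma reflTransGen_zfStep_insert (h : forceIn G Set.univ F u v) (hF : F ⊆ F') :
    Relation.ReflTransGen (zfStep G) F' (insert v F') := by
  by_cases hv : v ∈ F'
  · rw [Set.insert_eq_of_mem hv]
  · exact .single ⟨u, v, forceIn_univ_of_subset h hF hv, rfl⟩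

lemma reflTransGen_psdStep_insert (h : psdForce G F u v) (hF : F ⊆ F') :
    Relation.ReflTransGen (psdStep G) F' (insert v F') := by
  by_cases hv : v ∈ F'
  · rw [Set.insert_eq_of_mem hv]
  · exact .single ⟨u, v, psdForce_of_subset h hF hv, rfl⟩

lemma unfilledComponents_eq_image (F : Set V) :
    unfilledComponents G F = (fun v => {w | reachAvoid G F v w}) '' Fᶜ := by
  ext C
  simp [unfilledComponents, eq_comm]

lemma ncard_le_card_of_subset_unfilledComponents [Finite V] {𝒞 : Set (Set V)}
    (h𝒞 : 𝒞 ⊆ unfilledComponents G F) : 𝒞.ncard ≤ Nat.card V :=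
  calc 𝒞.ncard ≤ (unfilledComponents G F).ncard := Set.ncard_le_ncard h𝒞
    _ ≤ Fᶜ.ncard := by rw [unfilledComponents_eq_image]; exact Set.ncard_image_le
    _ ≤ Nat.card V := Set.ncard_le_card _

lemma subset_of_reflTransGen_rule3Step {A F N : Set V}
    (h : Relation.ReflTransGen (rule3Step G A) F N) : F ⊆ N := by
  induction h with
  | refl => rfl
  | tail _ hstep ih =>
    obtain ⟨u, v, -, rfl⟩ := hstep
    exact ih.trans (Set.subset_insert _ _)

/-- A vertex joined to `v` in `G - N` is joined to `v` in `G - F`, so it lies in the same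
selected component as `v`. -/
lemma psdForce_of_forceIn_components {𝒞 : Set (Set V)} {N : Set V}
    (h𝒞 : 𝒞 ⊆ unfilledComponents G F) (hFN : F ⊆ N) (h : forceIn G (F ∪ ⋃₀ 𝒞) N u v) :
    psdForce G N u v := by
  obtain ⟨-, hvA, hu, hv, hadj, huniq⟩ := h
  refine ⟨hu, hv, hadj, fun w huw hw hvw => huniq w ?_ huw hw⟩
  obtain ⟨C, hC, hvC⟩ := hvA.resolve_left (hv <| hFN ·)
  obtain ⟨v₀, -, rfl⟩ := h𝒞 hC
  exact Or.inr ⟨_, hC, Relation.ReflTransGen.trans hvC (reachAvoid_anti hFN hvw)⟩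

lemma reflTransGen_psdStep_union_of_rule3Step {𝒞 : Set (Set V)} {N : Set V} (X : Set V)
    (h𝒞 : 𝒞 ⊆ unfilledComponents G F)
    (h : Relation.ReflTransGen (rule3Step G (F ∪ ⋃₀ 𝒞)) F N) :
    Relation.ReflTransGen (psdStep G) (F ∪ X) (N ∪ X) := by
  induction h with
  | refl => rfl
  | tail hFN hstep ih =>
    obtain ⟨u, v, hforce, rfl⟩ := hstep
    have hpsd :=
      psdForce_of_forceIn_components h𝒞 (subset_of_reflTransGen_rule3Step hFN) hforce
    rw [Set.insert_union]
    exact ih.trans (reflTransGen_psdStep_insert hpsd Set.subset_union_left)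

end Forcing

namespace ZqWinFrom

variable {G : SimpleGraph V} {q : ℕ} {F : Set V} {t : ℕ}

lemma mono_tokens {t' : ℕ} (h : ZqWinFrom G q F t) (ht : t ≤ t') : ZqWinFrom G q F t' := by
  induction h generalizing t' with
  | done => exact .done t'
  | rule1 v hv _ ih =>
    obtain ⟨s, rfl⟩ := Nat.exists_eq_add_of_le' (Nat.one_le_of_lt ht)
    exact .rule1 v hv (ih (by omega))
  | rule2 u v huv _ ih => exact .rule2 u v huv (ih ht)
  | rule3 𝒞 h𝒞 hcard next hnext _ ih =>
    exact .rule3 𝒞 h𝒞 hcard next hnext fun 𝒮 h1 h2 => ih 𝒮 h1 h2 ht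

lemma of_le_q {q' : ℕ} (hq : q ≤ q') (h : ZqWinFrom G q' F t) : ZqWinFrom G q F t := by
  induction h with
  | done t => exact .done t
  | rule1 v hv _ ih => exact .rule1 v hv ih
  | rule2 u v huv _ ih => exact .rule2 u v huv ih
  | rule3 𝒞 h𝒞 hcard next hnext _ ih => exact .rule3 𝒞 h𝒞 (by omega) next hnext ih

lemma of_union {S : Set V} (hS : S.Finite) (h : ZqWinFrom G q (F ∪ S) t) :
    ZqWinFrom G q F (t + S.ncard) := by
  induction S, hS using Set.Finite.induction_on generalizing F with
  | empty => simpa using h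
  | @insert a S ha hS ih =>
    rw [Set.union_insert, ← Set.insert_union] at h
    rw [Set.ncard_insert_of_notMem ha hS, ← Nat.add_assoc]
    by_cases haF : a ∈ F
    · rw [Set.insert_eq_of_mem haF] at h
      exact (ih h).mono_tokens (Nat.le_succ _)
    · exact .rule1 a haF (ih h)

lemma of_isZeroForcingSet (h : IsZeroForcingSet G F) : ZqWinFrom G q F 0 := by
  induction h using Relation.ReflTransGen.head_induction_on with
  | refl => exact .done 0
  | head hstep _ ih =>
    obtain ⟨u, v, hforce, rfl⟩ := hstep
    exact .rule2 u v hforce ih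

lemma of_psdStep {F' : Set V} (hstep : psdStep G F F') (h : ZqWinFrom G 0 F' t) :
    ZqWinFrom G 0 F t := by
  obtain ⟨u, v, ⟨hu, hv, hadj, huniq⟩, rfl⟩ := hstep
  set C := {w | reachAvoid G F v w}
  refine .rule3 {C} (Set.singleton_subset_iff.2 ⟨v, hv, rfl⟩) (by simp)
    (fun _ _ _ => insert v F) (fun 𝒮 h𝒮 hne => ?_) fun _ _ _ => h
  rw [hne.subset_singleton_iff.1 h𝒮, Set.sUnion_singleton]
  refine .single ⟨u, v, ⟨.inl hu, .inr .refl, hu, hv, hadj, ?_⟩, rfl⟩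
  rintro w (hwF | hwC) huw hw
  exacts [absurd hwF hw, huniq w huw hw hwC]

lemma of_isPSDForcingSet (h : IsPSDForcingSet G F) : ZqWinFrom G 0 F 0 := by
  induction h using Relation.ReflTransGen.head_induction_on with
  | refl => exact .done 0
  | head hstep _ ih => exact of_psdStep hstep ih

lemma empty_ncard {S : Set V} (hS : S.Finite) (h : ZqWinFrom G q S 0) :
    ZqWinFrom G q ∅ S.ncard := by
  have h' := of_union (F := ∅) hS (by rwa [Set.empty_union])
  rwa [zero_add] at h'

lemma empty_natCard [Finite V] (q : ℕ) : ZqWinFrom G q ∅ (Nat.card V) := by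
  simpa using empty_ncard (G := G) (q := q) Set.finite_univ (.done 0)

lemma exists_isZeroForcingSet_union [Finite V] (hq : Nat.card V ≤ q)
    (h : ZqWinFrom G q F t) :
    ∃ X : Set V, X.ncard ≤ t ∧ IsZeroForcingSet G (F ∪ X) := by
  induction h with
  | done t => exact ⟨∅, by simp, by rw [Set.union_empty]; exact .refl⟩
  | rule1 v _ _ ih =>
    obtain ⟨X, hX, hZ⟩ := ih
    refine ⟨insert v X, (Set.ncard_insert_le _ _).trans (by omega), ?_⟩
    rwa [Set.union_insert, ← Set.insert_union]
  | rule2 u v hforce _ ih =>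
    obtain ⟨X, hX, hZ⟩ := ih
    refine ⟨X, hX, (reflTransGen_zfStep_insert hforce Set.subset_union_left).trans ?_⟩
    rwa [← Set.insert_union]
  | rule3 𝒞 h𝒞 hcard => have := ncard_le_card_of_subset_unfilledComponents h𝒞; omega

lemma exists_isPSDForcingSet_union [Finite V] (h : ZqWinFrom G 0 F t) :
    ∃ X : Set V, X.ncard ≤ t ∧ IsPSDForcingSet G (F ∪ X) := by
  induction h with
  | done t => exact ⟨∅, by simp, by rw [Set.union_empty]; exact .refl⟩
  | rule1 v _ _ ih =>
    obtain ⟨X, hX, hP⟩ := ih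
    refine ⟨insert v X, (Set.ncard_insert_le _ _).trans (by omega), ?_⟩
    rwa [Set.union_insert, ← Set.insert_union]
  | rule2 u v hforce _ ih =>
    obtain ⟨X, hX, hP⟩ := ih
    refine ⟨X, hX, (reflTransGen_psdStep_insert (psdForce_of_forceIn_univ hforce)
      Set.subset_union_left).trans ?_⟩
    rwa [← Set.insert_union]
  | rule3 𝒞 h𝒞 hcard next hnext _ ih =>
    have hne : 𝒞.Nonempty := Set.nonempty_of_ncard_ne_zero (by omega)
    obtain ⟨X, hX, hP⟩ := ih 𝒞 subset_rfl hne
    exact ⟨X, hX,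
      (reflTransGen_psdStep_union_of_rule3Step X h𝒞 (hnext 𝒞 subset_rfl hne)).trans hP⟩

end ZqWinFrom

section Numbers

variable {G : SimpleGraph V}

lemma zqWinFrom_qZeroForcingNumber [Finite V] (q : ℕ) :
    ZqWinFrom G q ∅ (qZeroForcingNumber G q) :=
  Nat.sInf_mem ⟨_, ZqWinFrom.empty_natCard q⟩

lemma exists_isZeroForcingSet_ncard_eq :
    ∃ S : Set V, S.ncard = zeroForcingNumber G ∧ IsZeroForcingSet G S :=
  Nat.sInf_mem (s := {n | ∃ S : Set V, S.ncard = n ∧ IsZeroForcingSet G S})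
    ⟨_, Set.univ, rfl, .refl⟩

lemma exists_isPSDForcingSet_ncard_eq :
    ∃ S : Set V, S.ncard = psdZeroForcingNumber G ∧ IsPSDForcingSet G S :=
  Nat.sInf_mem (s := {n | ∃ S : Set V, S.ncard = n ∧ IsPSDForcingSet G S})
    ⟨_, Set.univ, rfl, .refl⟩

lemma zeroForcingNumber_le_ncard {S : Set V} (h : IsZeroForcingSet G S) :
    zeroForcingNumber G ≤ S.ncard :=
  Nat.sInf_le ⟨S, rfl, h⟩

lemma psdZeroForcingNumber_le_ncard {S : Set V} (h : IsPSDForcingSet G S) :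
    psdZeroForcingNumber G ≤ S.ncard :=
  Nat.sInf_le ⟨S, rfl, h⟩

lemma qZeroForcingNumber_le {q t : ℕ} (h : ZqWinFrom G q ∅ t) : qZeroForcingNumber G q ≤ t :=
  Nat.sInf_le h

lemma qZeroForcingNumber_mono [Finite V] : Monotone (qZeroForcingNumber G) :=
  fun _ _ hq => qZeroForcingNumber_le ((zqWinFrom_qZeroForcingNumber _).of_le_q hq)

lemma psdZeroForcingNumber_eq_qZeroForcingNumber_zero [Finite V] :
    psdZeroForcingNumber G = qZeroForcingNumber G 0 := by
  apply le_antisymm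
  · obtain ⟨X, hX, hP⟩ :=
      (zqWinFrom_qZeroForcingNumber (G := G) 0).exists_isPSDForcingSet_union
    exact (psdZeroForcingNumber_le_ncard (by simpa using hP)).trans hX
  · obtain ⟨S, hS, hP⟩ := exists_isPSDForcingSet_ncard_eq (G := G)
    rw [← hS]
    exact qZeroForcingNumber_le (.empty_ncard S.toFinite (.of_isPSDForcingSet hP))

lemma qZeroForcingNumber_eq_zeroForcingNumber [Finite V] {q : ℕ} (hq : Nat.card V ≤ q) :
    qZeroForcingNumber G q = zeroForcingNumber G := by
  apply le_antisymm
  · obtain ⟨S, hS, hZ⟩ := exists_isZeroForcingSet_ncard_eq (G := G)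
    rw [← hS]
    exact qZeroForcingNumber_le (.empty_ncard S.toFinite (.of_isZeroForcingSet hZ))
  · obtain ⟨X, hX, hZ⟩ :=
      (zqWinFrom_qZeroForcingNumber (G := G) q).exists_isZeroForcingSet_union hq
    exact (zeroForcingNumber_le_ncard (by simpa using hZ)).trans hX

end Numbers

theorem stmt0_general {V : Type*} [Fintype V] (G : SimpleGraph V) (q q' : ℕ)
    (hqq' : q ≤ q') :
    psdZeroForcingNumber G = qZeroForcingNumber G 0 ∧
    qZeroForcingNumber G q ≤ qZeroForcingNumber G q' ∧
    qZeroForcingNumber G (Fintype.card V) = zeroForcingNumber G :=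
  ⟨psdZeroForcingNumber_eq_qZeroForcingNumber_zero, qZeroForcingNumber_mono hqq',
    qZeroForcingNumber_eq_zeroForcingNumber Nat.card_eq_fintype_card.le⟩

/-- For every finite simple graph `G` on `n` vertices and all integers
`0 ≤ q ≤ q' ≤ n`: `Z₊(G) = Z₀(G)`, `Z_q(G) ≤ Z_{q'}(G)` and `Z_n(G) = Z(G)`. -/
theorem stmt0 {V : Type*} [Fintype V] (G : SimpleGraph V) (q q' : ℕ)
    (hqq' : q ≤ q') (hq'n : q' ≤ Fintype.card V) :
    psdZeroForcingNumber G = qZeroForcingNumber G 0 ∧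
    qZeroForcingNumber G q ≤ qZeroForcingNumber G q' ∧
    qZeroForcingNumber G (Fintype.card V) = zeroForcingNumber G :=
  stmt0_general G q q' hqq'

end ZqForcing
end

section
/- Let G be a block graph in which every block has at least three vertices, and let B be a block of G of size η that shares exactly one vertex with the other blocks of G. Then every zero forcing set of G contains at least η − 2 vertices of B. -/
namespace ZqForcing

variable {V : Type*}

section Blocks

variable {G : SimpleGraph V}

lemma noCutVertex_pair {w x : V} (h : G.Adj w x) : NoCutVertex G {w, x} := by
  have hsingleton : ∀ y : V, (G.induce {y}).Connected := fun y =>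
    (SimpleGraph.connected_iff_exists_forall_reachable _).2
      ⟨⟨y, rfl⟩, fun ⟨_, hb⟩ => by subst hb; rfl⟩
  refine ⟨(SimpleGraph.connected_iff_exists_forall_reachable _).2 ⟨⟨w, Or.inl rfl⟩, ?_⟩, ?_⟩
  · rintro ⟨b, rfl | rfl⟩
    · rfl
    · exact SimpleGraph.Adj.reachable (G := G.induce {w, b}) h
  · rintro u (rfl | rfl) -
    · rw [Set.pair_sdiff_left h.ne]; exact hsingleton x
    · rw [Set.pair_sdiff_right h.ne]; exact hsingleton w

lemma NoCutVertex.exists_isBlock_superset [Finite V] {s : Set V} (hs : NoCutVertex G s) :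
    ∃ B, IsBlock G B ∧ s ⊆ B := by
  obtain ⟨B, hsB, hmax⟩ := Finite.exists_le_maximal hs
  exact ⟨B, ⟨hmax.prop, fun B' hBB' hB' => (hmax.2 hB' hBB').antisymm hBB'⟩, hsB⟩

lemma exists_isBlock_of_adj [Finite V] {w x : V} (h : G.Adj w x) :
    ∃ B, IsBlock G B ∧ w ∈ B ∧ x ∈ B := by
  obtain ⟨B, hB, hsub⟩ := (noCutVertex_pair h).exists_isBlock_superset
  exact ⟨B, hB, hsub (.inl rfl), hsub (.inr rfl)⟩

lemma mem_of_adj_of_isBlock_unique [Finite V] {B : Set V} {w x : V}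
    (hw : ∀ B', IsBlock G B' → w ∈ B' → B' = B) (h : G.Adj w x) : x ∈ B := by
  obtain ⟨B', hB', hwB', hxB'⟩ := exists_isBlock_of_adj h
  exact hw B' hB' hwB' ▸ hxB'

end Blocks

section Forcing

variable {G : SimpleGraph V} {K T : Set V}

/-- A vertex forcing into `T` lies in the clique `K`, so it sees every unfilled vertex of `T`. -/
lemma notMem_of_forceIn_of_one_lt_ncard (hK : G.IsClique K) (hTK : T ⊆ K)
    (hT : ∀ z ∈ T, ∀ u, G.Adj z u → u ∈ K) {F : Set V} {u z : V}
    (hforce : forceIn G Set.univ F u z) (htwo : 1 < (T \ F).ncard) : z ∉ T := by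
  intro hz
  obtain ⟨-, -, huF, -, huz, huniq⟩ := hforce
  have hu : u ∈ K := hT z hz u huz.symm
  have hforced : ∀ y ∈ T \ F, y = z := fun y hy =>
    huniq y trivial (hK hu (hTK hy.1) fun h => hy.2 (h ▸ huF)) hy.2
  obtain ⟨a, ha, b, hb, hab⟩ := (Set.one_lt_ncard_iff_nontrivial_and_finite.1 htwo).1
  exact hab ((hforced a ha).trans (hforced b hb).symm)

lemma ncard_sdiff_le_one_of_isZeroForcingSet (hK : G.IsClique K) (hTK : T ⊆ K)
    (hT : ∀ z ∈ T, ∀ u, G.Adj z u → u ∈ K) {S : Set V} (hS : IsZeroForcingSet G S) :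
    (T \ S).ncard ≤ 1 := by
  by_contra! htwo
  have hfrozen : ∀ F, Relation.ReflTransGen (zfStep G) S F → T \ F = T \ S := by
    intro F hF
    induction hF with
    | refl => rfl
    | tail _ hstep ih =>
      obtain ⟨u, z, hforce, rfl⟩ := hstep
      rw [← ih] at htwo ⊢
      exact Set.sdiff_insert_of_notMem (notMem_of_forceIn_of_one_lt_ncard hK hTK hT hforce htwo)
  rw [← hfrozen _ hS, Set.sdiff_univ, Set.ncard_empty] at htwo
  omega

end Forcing

theorem stmt1_general {V : Type*} [Fintype V] (G : SimpleGraph V)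
    (hG : IsBlockGraph G)
    (B : Set V) (hB : IsBlock G B) (η : ℕ) (hη : B.ncard = η)
    (v : V)
    (hshared : ∀ w ∈ B, ((∃ B' : Set V, IsBlock G B' ∧ B' ≠ B ∧ w ∈ B') ↔ w = v))
    (S : Set V) (hS : IsZeroForcingSet G S) :
    η - 2 ≤ (S ∩ B).ncard := by
  have hclosed : ∀ w ∈ B \ {v}, ∀ x, G.Adj w x → x ∈ B := fun w hw _ =>
    mem_of_adj_of_isBlock_unique fun B' hB' hwB' => by
      by_contra hne
      exact hw.2 ((hshared w hw.1).1 ⟨B', hB', hne, hwB'⟩)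
  have hfree : ((B \ {v}) \ S).ncard ≤ 1 :=
    ncard_sdiff_le_one_of_isZeroForcingSet (hG.2 B hB) Set.sdiff_subset hclosed hS
  have hcover : B ⊆ (S ∩ B ∪ (B \ {v}) \ S) ∪ {v} := by
    intro w hw
    by_cases hwv : w = v <;> by_cases hwS : w ∈ S <;> simp [*]
  have hB3 := (Set.ncard_le_ncard hcover).trans (Set.ncard_union_le _ _)
  have hB2 := Set.ncard_union_le (S ∩ B) ((B \ {v}) \ S)
  rw [Set.ncard_singleton] at hB3
  omega

/-- in a block graph all of whose blocks have at least three vertices,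
if `B` is a block of size `η` sharing exactly one vertex `v` with the other blocks,
then every zero forcing set contains at least `η - 2` vertices of `B`. -/
theorem stmt1 {V : Type*} [Fintype V] (G : SimpleGraph V)
    (hG : IsBlockGraph G) (hbig : ∀ B : Set V, IsBlock G B → 3 ≤ B.ncard)
    (B : Set V) (hB : IsBlock G B) (η : ℕ) (hη : B.ncard = η)
    (v : V) (hv : v ∈ B)
    (hshared : ∀ w ∈ B, ((∃ B' : Set V, IsBlock G B' ∧ B' ≠ B ∧ w ∈ B') ↔ w = v))
    (S : Set V) (hS : IsZeroForcingSet G S) :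
    η - 2 ≤ (S ∩ B).ncard :=
  stmt1_general G hG B hB η hη v hshared S hS

end ZqForcing
end

section
/- Let G be a cactus graph and let C be an induced cycle of G. If F ⊆ V(G) is a set of filled vertices containing at least two vertices of C, then repeated application of the positive semidefinite color change rule starting from F eventually fills all vertices of C. -/
namespace ZqForcing

variable {V : Type*}

/-
Let `u` be a filled vertex of the cycle `C` and `w` an unfilled neighbour of `u` on `C`.
If `u` also had another unfilled neighbour `w'` in the component of `G - F` containing `w`,
then `u → w ⇝ w' → u`, closed by a path of `G - F`, would be a cycle through the edge `uw`.
In a cactus it would therefore have the same edges, hence the same vertices, as `C`; but it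
meets `F` only in `u`, while `C` contains two filled vertices. So `u` forces `w`, and as long
as `C` is not completely filled some edge of `C` joins a filled vertex to an unfilled one.
-/

open SimpleGraph

theorem _root_.SimpleGraph.Walk.exists_boundary_dart_of_mem_support {G : SimpleGraph V}
    {a x y : V} (c : G.Walk a a) (S : Set V) (hx : x ∈ c.support) (hy : y ∈ c.support)
    (hxS : x ∈ S) (hyS : y ∉ S) : ∃ d ∈ c.darts, d.fst ∈ S ∧ d.snd ∉ S := by
  classical
  by_cases ha : a ∈ S
  · obtain ⟨d, hd, hdS⟩ := (c.takeUntil y hy).exists_boundary_dart S ha hyS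
    exact ⟨d, c.darts_takeUntil_subset_darts hy hd, hdS⟩
  · obtain ⟨d, hd, hdS⟩ := (c.dropUntil x hx).exists_boundary_dart S hxS ha
    exact ⟨d, c.darts_dropUntil_subset_darts hx hd, hdS⟩

theorem exists_reflTransGen_superset_of_forall_insert {r : Set V → Set V → Prop} {S F : Set V}
    (hS : S.Finite)
    (hstep : ∀ F', F ⊆ F' → ¬ S ⊆ F' → ∃ w ∈ S, w ∉ F' ∧ r F' (insert w F')) :
    ∃ F', Relation.ReflTransGen r F F' ∧ S ⊆ F' := by
  induction hn : (S \ F).ncard using Nat.strong_induction_on generalizing F with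
  | _ n ih =>
    by_cases hSF : S ⊆ F
    · exact ⟨F, .refl, hSF⟩
    obtain ⟨w, hwS, hwF, hw⟩ := hstep F subset_rfl hSF
    have hlt : (S \ insert w F).ncard < n := by
      rw [← Set.union_singleton, ← Set.sdiff_sdiff, ← hn]
      exact Set.ncard_sdiff_singleton_lt_of_mem ⟨hwS, hwF⟩ hS.sdiff
    obtain ⟨F', hF', hSF'⟩ :=
      ih _ hlt (fun F' hF' ↦ hstep F' ((Set.subset_insert w F).trans hF')) rfl
    exact ⟨F', .head hw hF', hSF'⟩

variable {G : SimpleGraph V} {F : Set V}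

theorem reachAvoid.exists_isPath {a b : V} (h : reachAvoid G F a b) (ha : a ∉ F) :
    ∃ p : G.Walk a b, p.IsPath ∧ ∀ x ∈ p.support, x ∉ F := by
  classical
  suffices ∃ p : G.Walk a b, ∀ x ∈ p.support, x ∉ F by
    obtain ⟨p, hp⟩ := this
    exact ⟨p.bypass, p.bypass_isPath, fun x hx ↦ hp x (p.support_bypass_subset_support hx)⟩
  induction h with
  | refl => exact ⟨.nil, by simpa⟩
  | tail _ hbc ih =>
    obtain ⟨p, hp⟩ := ih
    refine ⟨p.concat hbc.1, fun x hx ↦ ?_⟩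
    rw [Walk.support_concat, List.mem_append, List.mem_singleton] at hx
    rcases hx with hx | rfl
    exacts [hp x hx, hbc.2.2]

theorem IsCactus.mem_support_of_mem_edges (hG : IsCactus G) {a b : V} {c : G.Walk a a}
    {d : G.Walk b b} (hc : c.IsCycle) (hd : d.IsCycle) {e : Sym2 V} (hec : e ∈ c.edges)
    (hed : e ∈ d.edges) {z : V} (hz : z ∈ c.support) : z ∈ d.support := by
  rw [Walk.mem_support_iff_exists_mem_edges_of_not_nil hc.not_nil] at hz
  obtain ⟨e', he', hze'⟩ := hz
  exact (Walk.mem_support_iff_exists_mem_edges_of_not_nil hd.not_nil).2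
    ⟨e', (hG.2 a b c d hc hd e hec hed e').1 he', hze'⟩

theorem IsCactus.psdForce_of_mem_edges (hG : IsCactus G) {a : V} {c : G.Walk a a}
    (hc : c.IsCycle) (hF : 2 ≤ ({x | x ∈ c.support} ∩ F).ncard) {u w : V}
    (huw : s(u, w) ∈ c.edges) (hu : u ∈ F) (hw : w ∉ F) : psdForce G F u w := by
  have hadj := c.adj_of_mem_edges huw
  refine ⟨hu, hw, hadj, fun w' huw' hw' hww' ↦ ?_⟩
  by_contra hne
  obtain ⟨q, hq, hqF⟩ := hww'.exists_isPath hw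
  have huq : u ∉ q.support := fun h ↦ hqF u h hu
  have hd : (Walk.cons hadj (q.concat huw'.symm)).IsCycle := by
    refine (Walk.cons_isCycle_iff _ hadj).2 ⟨hq.concat huq _, ?_⟩
    rw [Walk.edges_concat, List.concat_eq_append, List.mem_append, List.mem_singleton,
      Sym2.eq_swap]
    rintro (h | h)
    · exact huq (q.snd_mem_support_of_mem_edges h)
    · exact hne (Sym2.congr_left.1 h).symm
  have hcF : {x | x ∈ c.support} ∩ F ⊆ {u} := by
    rintro z ⟨hz, hzF⟩
    have := hG.mem_support_of_mem_edges hc hd huw List.mem_cons_self hz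
    rw [Walk.support_cons, Walk.support_concat, List.mem_cons, List.mem_append,
      List.mem_singleton] at this
    rcases this with rfl | hzq | rfl
    exacts [rfl, absurd hzF (hqF z hzq), rfl]
  have := Set.ncard_le_ncard hcF
  rw [Set.ncard_singleton] at this
  omega

theorem stmt4_general {V : Type*} (G : SimpleGraph V) (hG : IsCactus G)
    {v : V} (c : G.Walk v v) (hc : IsInducedCycle G c)
    (F : Set V) (hF : 2 ≤ ({x | x ∈ c.support} ∩ F).ncard) :
    ∃ F', Relation.ReflTransGen (psdStep G) F F' ∧ ∀ x ∈ c.support, x ∈ F' := by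
  obtain ⟨x, hx, hxF⟩ : ({x | x ∈ c.support} ∩ F).Nonempty :=
    Set.nonempty_of_ncard_ne_zero (by omega)
  refine exists_reflTransGen_superset_of_forall_insert c.support.finite_toSet
    fun F' hFF' hcF' ↦ ?_
  obtain ⟨y, hy, hyF'⟩ := Set.not_subset.1 hcF'
  obtain ⟨d, hd, hd_fst, hd_snd⟩ :=
    c.exists_boundary_dart_of_mem_support F' hx hy (hFF' hxF) hyF'
  have hF' : 2 ≤ ({x | x ∈ c.support} ∩ F').ncard :=
    hF.trans (Set.ncard_le_ncard (Set.inter_subset_inter_right _ hFF')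
      (c.support.finite_toSet.inter_of_left _))
  have hforce := hG.psdForce_of_mem_edges hc.1 hF' (List.mem_map_of_mem hd) hd_fst hd_snd
  exact ⟨d.snd, c.dart_snd_mem_support_of_mem_darts hd, hd_snd, _, _, hforce, rfl⟩

/-- in a cactus graph, once a filled set `F` contains two vertices of an
induced cycle `C`, repeated PSD color changes eventually fill all of `C`. -/
theorem stmt4 {V : Type*} [Fintype V] (G : SimpleGraph V) (hG : IsCactus G)
    {v : V} (c : G.Walk v v) (hc : IsInducedCycle G c)
    (F : Set V) (hF : 2 ≤ ({x | x ∈ c.support} ∩ F).ncard) :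
    ∃ F', Relation.ReflTransGen (psdStep G) F F' ∧ ∀ x ∈ c.support, x ∈ F' :=
  stmt4_general G hG c hc F hF

end ZqForcing
end

section
/- Let G be a cactus graph and let v be a vertex of G that lies on no cycle of G. Let F ⊆ V(G) be a set of filled vertices with v ∉ F, and let u ∈ F be adjacent to v. Then v is the unique neighbor of u in the connected component of G − F that contains v; consequently, u can force v under the positive semidefinite color change rule. -/
namespace ZqForcing

variable {V : Type*}

lemma exists_walk_avoid {G : SimpleGraph V} {F : Set V} {v w : V}
    (hvF : v ∉ F) (h : reachAvoid G F v w) :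
    ∃ p : G.Walk v w, ∀ x ∈ p.support, x ∉ F := by
  induction h with
  | refl => exact ⟨SimpleGraph.Walk.nil, by simpa using hvF⟩
  | tail _ hbc ih =>
    obtain ⟨p, hp⟩ := ih
    refine ⟨p.concat hbc.1, ?_⟩
    intro x hx
    simp [SimpleGraph.Walk.concat_eq_append, SimpleGraph.Walk.support_append] at hx
    rcases hx with hx | rfl
    · exact hp x hx
    · exact hbc.2.2

lemma key [DecidableEq V] {G : SimpleGraph V} {F : Set V}
    (v : V) (hv : ∀ (w : V) (c : G.Walk w w), c.IsCycle → v ∉ c.support)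
    (hvF : v ∉ F) (u : V) (hu : u ∈ F) (hadj : G.Adj u v) :
    ∀ w, G.Adj u w → w ∉ F → reachAvoid G F v w → w = v := by
  intro w huw hwF hreach
  by_contra hne
  obtain ⟨p0, hp0⟩ := exists_walk_avoid hvF hreach
  set p : G.Walk v w := (p0.toPath : G.Walk v w) with hp
  have hpath : p.IsPath := p0.toPath.2
  have hsup : ∀ x ∈ p.support, x ∉ F := fun x hx =>
    hp0 x (SimpleGraph.Walk.support_toPath_subset p0 (hp ▸ hx))
  have hunp : u ∉ p.support := fun h => hsup u h hu
  set q : G.Walk v u := p.concat huw.symm with hq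
  have hqpath : q.IsPath := by
    rw [← SimpleGraph.Walk.isPath_reverse_iff]
    rw [hq, SimpleGraph.Walk.reverse_concat]
    exact (hpath.reverse).cons (by simpa using hunp)
  have hedge : s(u, v) ∉ q.edges := by
    rw [hq, SimpleGraph.Walk.concat_eq_append]
    simp only [SimpleGraph.Walk.edges_append, SimpleGraph.Walk.edges_cons,
      SimpleGraph.Walk.edges_nil, List.mem_append, List.mem_cons, List.not_mem_nil, or_false]
    rintro (h | h)
    · exact hunp (SimpleGraph.Walk.fst_mem_support_of_mem_edges p h)
    · rw [Sym2.eq_iff] at h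
      rcases h with ⟨rfl, rfl⟩ | ⟨-, rfl⟩
      · exact hwF hu
      · exact hne rfl
  have hcyc : (SimpleGraph.Walk.cons hadj q).IsCycle :=
    (SimpleGraph.Walk.cons_isCycle_iff q hadj).2 ⟨hqpath, hedge⟩
  exact hv u _ hcyc (by simp [SimpleGraph.Walk.support_cons, hq,
    SimpleGraph.Walk.start_mem_support])


/-- in a cactus graph, if `v` lies on no cycle, `v ∉ F` and a filled vertex
`u` is adjacent to `v`, then `v` is the unique neighbor of `u` in the component of
`G - F` containing `v`; consequently `u` can PSD-force `v`. -/
theorem stmt6 {V : Type*} [Fintype V] (G : SimpleGraph V) (hG : IsCactus G)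
    (v : V) (hv : ∀ (w : V) (c : G.Walk w w), c.IsCycle → v ∉ c.support)
    (F : Set V) (hvF : v ∉ F) (u : V) (hu : u ∈ F) (hadj : G.Adj u v) :
    (∀ w, G.Adj u w → w ∉ F → reachAvoid G F v w → w = v) ∧ psdForce G F u v := by
  have : DecidableEq V := Classical.decEq V
  have h := key v hv hvF u hu hadj
  exact ⟨h, hu, hvF, hadj, h⟩

end ZqForcing
end

section
/- For all integers η, l ≥ 1 and k ≥ 2, and every integer q ≥ 0, the generalized windmill graph of Type I satisfies Z_q(W'(η,k,l)) = Z(W'(η,k,l)) = η(k−1) + l. -/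
namespace ZqForcing

variable {V : Type*}

/-!
Sort the vertices into `η + 1` parts, the copies of `K_k` and the central clique, and let
`φ(F)` be the number of unfilled vertices minus `min η (number of parts meeting them)`.
Then `φ(∅) = η(k-1) + l`, `φ(V) = 0`, and a token lowers `φ` by at most one. A force, also
one inside a single component chosen by the oracle, always fills the last unfilled vertex of
its part while some other part is already full, so it leaves `φ` unchanged; hence every
winning strategy spends at least `η(k-1) + l` tokens. Conversely, all vertices but one per
copy form a zero forcing set of that size, and a zero forcing set is a winning strategy.
-/

open Set

theorem compl_insert_eq_sdiff {α : Type*} (a : α) (s : Set α) : (insert a s)ᶜ = sᶜ \ {a} := by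
  ext; simp [and_comm]

section Game

variable {G : SimpleGraph V} {q : ℕ}

theorem ZqWinFrom.of_reflTransGen_zfStep {F F' : Set V} {t : ℕ}
    (hFF' : Relation.ReflTransGen (zfStep G) F F') (h : ZqWinFrom G q F' t) :
    ZqWinFrom G q F t := by
  induction hFF' using Relation.ReflTransGen.head_induction_on with
  | refl => exact h
  | head hstep _ ih =>
    obtain ⟨u, v, huv, rfl⟩ := hstep
    exact .rule2 u v huv ih

theorem ZqWinFrom.of_subset [Finite V] {F F' : Set V} {t : ℕ} (hFF' : F ⊆ F')
    (h : ZqWinFrom G q F' t) : ZqWinFrom G q F (t + (F' \ F).ncard) := by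
  generalize hn : (F' \ F).ncard = n
  induction n generalizing F with
  | zero =>
    rw [ncard_eq_zero, sdiff_eq_empty] at hn
    rwa [hFF'.antisymm hn]
  | succ n ih =>
    obtain ⟨a, haF', haF⟩ := nonempty_of_ncard_ne_zero (s := F' \ F) (by omega)
    have hcard : (F' \ insert a F).ncard = n := by
      rw [← union_singleton, ← sdiff_sdiff,
        ncard_sdiff_singleton_of_mem (show a ∈ F' \ F from ⟨haF', haF⟩), hn, Nat.add_sub_cancel]
    exact .rule1 a haF (ih (insert_subset haF' hFF') hcard)

theorem zqWinFrom_empty_of_isZeroForcingSet [Finite V] {S : Set V}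
    (hS : IsZeroForcingSet G S) : ZqWinFrom G q ∅ S.ncard := by
  simpa using (ZqWinFrom.done (G := G) (q := q) 0).of_reflTransGen_zfStep hS
    |>.of_subset (empty_subset S)

theorem qZeroForcingNumber_le_zeroForcingNumber [Finite V] :
    qZeroForcingNumber G q ≤ zeroForcingNumber G := by
  obtain ⟨S, hcard, hS⟩ := Nat.sInf_mem (s := {n | ∃ S : Set V, S.ncard = n ∧
    IsZeroForcingSet G S}) ⟨_, univ, rfl, Relation.ReflTransGen.refl⟩
  rw [zeroForcingNumber, ← hcard]
  exact Nat.sInf_le (zqWinFrom_empty_of_isZeroForcingSet hS)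

theorem le_qZeroForcingNumber [Finite V] {n : ℕ} (h : ∀ t, ZqWinFrom G q ∅ t → n ≤ t) :
    n ≤ qZeroForcingNumber G q :=
  le_csInf ⟨_, zqWinFrom_empty_of_isZeroForcingSet (S := univ) .refl⟩ h

theorem isZeroForcingSet_of_forall_exists_forceIn [Finite V] {S : Set V}
    (h : ∀ F, S ⊆ F → F ≠ univ → ∃ u v, forceIn G univ F u v) : IsZeroForcingSet G S := by
  suffices ∀ n F, S ⊆ F → Fᶜ.ncard = n → Relation.ReflTransGen (zfStep G) F univ from
    this _ S subset_rfl rfl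
  intro n
  induction n with
  | zero =>
    intro F _ hF
    rw [ncard_eq_zero, compl_empty_iff] at hF
    rw [hF]
  | succ n ih =>
    intro F hSF hF
    obtain ⟨u, v, huv⟩ := h F hSF (by rintro rfl; simp at hF)
    refine .head ⟨u, v, huv, rfl⟩ (ih _ (hSF.trans (subset_insert v F)) ?_)
    rw [compl_insert_eq_sdiff, ncard_sdiff_singleton_of_mem huv.2.2.2.1, hF, Nat.add_sub_cancel]

theorem reflTransGen_rule3Step_potential_le {A F F' : Set V} (φ : Set V → ℕ)
    (hφ : ∀ b u v, F ⊆ b → forceIn G A b u v → φ b ≤ φ (insert v b))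
    (h : Relation.ReflTransGen (rule3Step G A) F F') : φ F ≤ φ F' := by
  suffices F ⊆ F' ∧ φ F ≤ φ F' from this.2
  induction h with
  | refl => exact ⟨subset_rfl, le_rfl⟩
  | tail _ hstep ih =>
    obtain ⟨u, v, huv, rfl⟩ := hstep
    exact ⟨ih.1.trans (subset_insert _ _), ih.2.trans (hφ _ u v ih.1 huv)⟩

theorem ZqWinFrom.potential_le (φ : Set V → ℕ) (h_univ : φ univ = 0)
    (h_token : ∀ F v, φ F ≤ φ (insert v F) + 1)
    (h_force : ∀ F u v, forceIn G univ F u v → φ F ≤ φ (insert v F))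
    (h_rule3 : ∀ F C b u v, C ∈ unfilledComponents G F → F ⊆ b →
      forceIn G (F ∪ C) b u v → φ b ≤ φ (insert v b))
    {F : Set V} {t : ℕ} (h : ZqWinFrom G q F t) : φ F ≤ t := by
  induction h with
  | done t => simp [h_univ]
  | rule1 v _ _ ih => exact (h_token _ v).trans (by omega)
  | rule2 u v huv _ ih => exact (h_force _ u v huv).trans ih
  | rule3 𝒞 h𝒞 hcard next hnext _ ih =>
    obtain ⟨C, hC⟩ := nonempty_of_ncard_ne_zero (s := 𝒞) (by omega)
    have hchain := hnext {C} (singleton_subset_iff.mpr hC) (singleton_nonempty C)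
    rw [sUnion_singleton] at hchain
    exact (reflTransGen_rule3Step_potential_le φ
      (fun b u v hb huv => h_rule3 _ C b u v (h𝒞 hC) hb huv) hchain).trans (ih _ _ _)

end Game

section Potential

variable {P : Type*} (p : V → P)

noncomputable def partPotential (F : Set V) : ℕ :=
  Fᶜ.ncard - min (Nat.card P - 1) (p '' Fᶜ).ncard

variable {p}

theorem partPotential_univ : partPotential p univ = 0 := by
  simp [partPotential]

theorem partPotential_empty (hp : Function.Surjective p) :
    partPotential p ∅ = Nat.card V - (Nat.card P - 1) := by
  simp [partPotential, image_univ_of_surjective hp]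

variable [Finite V]

theorem partPotential_le_insert (F : Set V) (v : V) :
    partPotential p F ≤ partPotential p (insert v F) + 1 := by
  have hsub : (insert v F)ᶜ ⊆ Fᶜ := compl_subset_compl.mpr (subset_insert v F)
  have h₁ := ncard_le_ncard (image_mono (f := p) hsub)
  have h₂ : (p '' (insert v F)ᶜ).ncard ≤ (insert v F)ᶜ.ncard := ncard_image_le
  have h₃ : Fᶜ.ncard - 1 ≤ (insert v F)ᶜ.ncard := by
    rw [compl_insert_eq_sdiff]
    exact pred_ncard_le_ncard_sdiff_singleton Fᶜ v
  unfold partPotential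
  omega

theorem partPotential_insert_of_isolated [Finite P] {F : Set V} {v : V} (hv : v ∉ F)
    (hsole : ∀ w ∉ F, p w = p v → w = v) (hmiss : ∃ c, ∀ w ∉ F, p w ≠ c) :
    partPotential p (insert v F) = partPotential p F := by
  have himage : p '' (insert v F)ᶜ = p '' Fᶜ \ {p v} := by
    ext c
    simp only [compl_insert_eq_sdiff, mem_image, mem_sdiff, mem_compl_iff, mem_singleton_iff]
    constructor
    · rintro ⟨w, ⟨hwF, hwv⟩, rfl⟩
      exact ⟨⟨w, hwF, rfl⟩, fun h => hwv (hsole w hwF h)⟩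
    · rintro ⟨⟨w, hwF, rfl⟩, hwv⟩
      exact ⟨w, ⟨hwF, by rintro rfl; exact hwv rfl⟩, rfl⟩
  have hpart : (p '' (insert v F)ᶜ).ncard + 1 = (p '' Fᶜ).ncard := by
    rw [himage]
    exact ncard_sdiff_singleton_add_one (mem_image_of_mem p hv)
  have hvert : (insert v F)ᶜ.ncard + 1 = Fᶜ.ncard := by
    rw [compl_insert_eq_sdiff]
    exact ncard_sdiff_singleton_add_one hv
  have hle : (p '' Fᶜ).ncard < Nat.card P := by
    obtain ⟨c, hc⟩ := hmiss
    refine ncard_lt_card fun h => ?_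
    obtain ⟨w, hwF, hw⟩ := h.symm ▸ mem_univ c
    exact hc w hwF hw
  have h₂ : (p '' Fᶜ).ncard ≤ Fᶜ.ncard := ncard_image_le
  unfold partPotential
  omega

end Potential

section Windmill

variable {η k l : ℕ}

def windmillPart : (Fin η × Fin k) ⊕ Fin l → Option (Fin η) :=
  Sum.elim (fun a => some a.1) fun _ => none

theorem windmillI_adj {a b : (Fin η × Fin k) ⊕ Fin l} :
    (windmillI η k l).Adj a b ↔ a ≠ b ∧
      (windmillPart a = none ∨ windmillPart b = none ∨ windmillPart a = windmillPart b) := by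
  rcases a with ⟨i, x⟩ | z <;> rcases b with ⟨j, y⟩ | w <;>
    simp [windmillI, windmillPart, eq_comm]

theorem windmillPart_surjective (hk : 1 ≤ k) (hl : 1 ≤ l) :
    Function.Surjective (windmillPart (η := η) (k := k) (l := l))
  | none => ⟨.inr ⟨0, hl⟩, rfl⟩
  | some i => ⟨.inl (i, ⟨0, hk⟩), rfl⟩

theorem partPotential_windmillPart_empty (hk : 1 ≤ k) (hl : 1 ≤ l) :
    partPotential (windmillPart (η := η) (k := k) (l := l)) ∅ = η * (k - 1) + l := by
  rw [partPotential_empty (windmillPart_surjective hk hl)]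
  simp only [Nat.card_eq_fintype_card, Fintype.card_sum, Fintype.card_prod, Fintype.card_fin,
    Fintype.card_option, Nat.add_sub_cancel]
  rw [Nat.mul_sub_one]
  have := Nat.le_mul_of_pos_right η hk
  omega

theorem windmillI_forceIn_univ (hη : 1 ≤ η) {F : Set ((Fin η × Fin k) ⊕ Fin l)} {u v}
    (h : forceIn (windmillI η k l) univ F u v) :
    (∀ w ∉ F, windmillPart w = windmillPart v → w = v) ∧
      ∃ c, ∀ w ∉ F, windmillPart w ≠ c := by
  obtain ⟨-, -, huF, -, huv, hu⟩ := h
  have hfar : ∀ w ∉ F, w ≠ v → ¬ (windmillPart u = none ∨ windmillPart w = none ∨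
      windmillPart u = windmillPart w) := fun w hwF hwv hadj =>
    hwv (hu w trivial (windmillI_adj.mpr ⟨by rintro rfl; exact hwF huF, hadj⟩) hwF)
  replace huv := (windmillI_adj.mp huv).2
  refine ⟨fun w hwF hwv => by_contra fun hne => ?_, ?_⟩
  · have := hfar w hwF hne
    rw [hwv] at this
    tauto
  by_cases hv : windmillPart v = none
  · refine ⟨some ((windmillPart u).getD ⟨0, hη⟩), fun w hwF hw => hfar w hwF
      (by rintro rfl; simp [hv] at hw) ?_⟩
    cases hu' : windmillPart u <;> simp_all
  · exact ⟨none, fun w hwF hw => hfar w hwF (by rintro rfl; exact hv hw) (Or.inr (Or.inl hw))⟩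

theorem windmillI_union_unfilledComponent_eq_univ {F C : Set ((Fin η × Fin k) ⊕ Fin l)}
    {z : Fin l} (hz : Sum.inr z ∉ F) (hC : C ∈ unfilledComponents (windmillI η k l) F) :
    F ∪ C = univ := by
  obtain ⟨v₀, hv₀, rfl⟩ := hC
  have hcenter_adj : ∀ a, a ≠ Sum.inr z → (windmillI η k l).Adj a (Sum.inr z) := fun a ha =>
    windmillI_adj.mpr ⟨ha, by simp [windmillPart]⟩
  have hto : reachAvoid (windmillI η k l) F v₀ (Sum.inr z) := by
    by_cases h : v₀ = Sum.inr z
    · rw [h]; exact .refl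
    · exact .single ⟨hcenter_adj v₀ h, hv₀, hz⟩
  refine eq_univ_of_forall fun w => or_iff_not_imp_left.mpr fun hw => ?_
  by_cases h : w = Sum.inr z
  · rwa [h]
  · exact hto.tail ⟨(hcenter_adj w h).symm, hz, hw⟩

theorem windmillI_forceIn_unfilledComponent (hη : 1 ≤ η)
    {F C b : Set ((Fin η × Fin k) ⊕ Fin l)} {u v}
    (hC : C ∈ unfilledComponents (windmillI η k l) F) (hFb : F ⊆ b)
    (h : forceIn (windmillI η k l) (F ∪ C) b u v) :
    (∀ w ∉ b, windmillPart w = windmillPart v → w = v) ∧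
      ∃ c, ∀ w ∉ b, windmillPart w ≠ c := by
  by_cases hcenter : ∀ z, Sum.inr z ∈ F
  swap
  · obtain ⟨z, hz⟩ := not_forall.mp hcenter
    rw [windmillI_union_unfilledComponent_eq_univ hz hC] at h
    exact windmillI_forceIn_univ hη h
  obtain ⟨-, hvA, hub, hvb, huv, hu⟩ := h
  have hnone : ∀ w ∉ b, windmillPart w ≠ none := by
    rintro (⟨i, x⟩ | z) hw
    · simp [windmillPart]
    · exact absurd (hFb (hcenter z)) hw
  refine ⟨fun w hwb hwv => by_contra fun hne => hne (hu w ?_ ?_ hwb), none, hnone⟩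
  · -- `w` is an unfilled neighbour of `v`, so it lies in the component `C` of `v`
    obtain ⟨v₀, -, rfl⟩ := hC
    have hvF : v ∉ F := fun h => hvb (hFb h)
    exact .inr ((hvA.resolve_left hvF).tail
      ⟨windmillI_adj.mpr ⟨Ne.symm hne, .inr (.inr hwv.symm)⟩, hvF, fun h => hwb (hFb h)⟩)
  · rw [windmillI_adj] at huv ⊢
    refine ⟨by rintro rfl; exact hwb hub, ?_⟩
    have := hnone v hvb
    rw [hwv]
    tauto

theorem windmillI_partPotential_le (hη : 1 ≤ η) {q : ℕ} {F : Set ((Fin η × Fin k) ⊕ Fin l)}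
    {t : ℕ} (h : ZqWinFrom (windmillI η k l) q F t) : partPotential windmillPart F ≤ t := by
  refine h.potential_le _ partPotential_univ partPotential_le_insert
    (fun F u v huv => ?_) (fun F C b u v hC hFb huv => ?_)
  · obtain ⟨hsole, hmiss⟩ := windmillI_forceIn_univ hη huv
    exact (partPotential_insert_of_isolated huv.2.2.2.1 hsole hmiss).ge
  · obtain ⟨hsole, hmiss⟩ := windmillI_forceIn_unfilledComponent hη hC hFb huv
    exact (partPotential_insert_of_isolated huv.2.2.2.1 hsole hmiss).ge

theorem windmillI_isZeroForcingSet (hk : 2 ≤ k) :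
    IsZeroForcingSet (windmillI η k l)
      (range fun i => (.inl (i, ⟨0, by omega⟩) : (Fin η × Fin k) ⊕ Fin l))ᶜ := by
  refine isZeroForcingSet_of_forall_exists_forceIn fun F hSF hF => ?_
  obtain ⟨w, hw⟩ := (ne_univ_iff_exists_notMem F).mp hF
  obtain ⟨i, rfl⟩ : w ∈ range _ := by_contra fun h => hw (hSF h)
  refine ⟨.inl (i, ⟨1, hk⟩), _, trivial, trivial, hSF ?_, hw,
    windmillI_adj.mpr ⟨by simp, by simp [windmillPart]⟩, fun w _ huw hwF => ?_⟩
  · rintro ⟨j, hj⟩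
    simp at hj
  · obtain ⟨j, rfl⟩ : w ∈ range _ := by_contra fun h => hwF (hSF h)
    simpa [windmillI_adj, windmillPart, eq_comm] using huw

theorem windmillI_forcingSet_ncard (hk : 2 ≤ k) :
    (range fun i => (.inl (i, ⟨0, by omega⟩) : (Fin η × Fin k) ⊕ Fin l))ᶜ.ncard =
      η * (k - 1) + l := by
  rw [ncard_compl, ncard_range_of_injective (fun i j h => by simpa using h)]
  simp only [Nat.card_eq_fintype_card, Fintype.card_sum, Fintype.card_prod, Fintype.card_fin]
  rw [Nat.mul_sub_one]
  have := Nat.le_mul_of_pos_right η (show 0 < k by omega)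
  omega

end Windmill

/-- for `η, l ≥ 1`, `k ≥ 2` and every `q ≥ 0`,
`Z_q(W'(η,k,l)) = Z(W'(η,k,l)) = η(k-1) + l`. -/
theorem stmt9 (η k l : ℕ) (hη : 1 ≤ η) (hk : 2 ≤ k) (hl : 1 ≤ l) (q : ℕ) :
    qZeroForcingNumber (windmillI η k l) q = η * (k - 1) + l ∧
    zeroForcingNumber (windmillI η k l) = η * (k - 1) + l := by
  have hlower : η * (k - 1) + l ≤ qZeroForcingNumber (windmillI η k l) q :=
    le_qZeroForcingNumber fun t ht =>
      (partPotential_windmillPart_empty (by omega) hl).ge.trans (windmillI_partPotential_le hη ht)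
  have hupper : zeroForcingNumber (windmillI η k l) ≤ η * (k - 1) + l :=
    Nat.sInf_le ⟨_, windmillI_forcingSet_ncard hk, windmillI_isZeroForcingSet hk⟩
  have := qZeroForcingNumber_le_zeroForcingNumber (G := windmillI η k l) (q := q)
  omega

end ZqForcing
end

section
/- For all integers η ≥ 2, l ≥ 1 and every integer q ≥ 1, the generalized windmill graph of Type I with k = 1 satisfies Z_q(W'(η,1,l)) = l + η − 2. -/
namespace ZqForcing

variable {V : Type*}

/-!
Upper bound: fill everything except one leaf `x₀` and one central vertex `c`; another leaf
then forces `c`, and `c` forces `x₀`.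

Lower bound: for `q ≥ 1` rule 3 is useless. Two unfilled components exist only once every
central vertex is filled, and then they are single leaves; if the oracle returns all selected
components, every filled central vertex sees at least two unfilled leaves and no leaf has an
unfilled neighbour, so nothing can be forced. Hence only tokens and forces fill vertices, and
at most two forces ever happen: a leaf can force only the last unfilled central vertex, and a
central vertex only the last unfilled vertex of the graph. This is the potential
`windmillPotential`, whose initial value is `2`.
-/

section Game

variable {G : SimpleGraph V} {q : ℕ} {F : Set V} {t : ℕ}

lemma ZqWinFrom.mono (h : ZqWinFrom G q F t) {t' : ℕ} (ht : t ≤ t') : ZqWinFrom G q F t' := by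
  induction h generalizing t' with
  | done => exact .done _
  | rule1 v hv _ ih =>
      obtain ⟨s, rfl⟩ := Nat.exists_eq_add_of_le ht
      rw [Nat.add_right_comm]
      exact .rule1 v hv (ih (Nat.le_add_right _ _))
  | rule2 u v huv _ ih => exact .rule2 u v huv (ih ht)
  | rule3 𝒞 h𝒞 hcard next hnext _ ih =>
      exact .rule3 𝒞 h𝒞 hcard next hnext fun 𝒮 h₁ h₂ => ih 𝒮 h₁ h₂ ht

lemma ZqWinFrom.of_insert (v : V) (h : ZqWinFrom G q (insert v F) t) :
    ZqWinFrom G q F (t + 1) := by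
  by_cases hv : v ∈ F
  · exact (Set.insert_eq_of_mem hv ▸ h).mono (Nat.le_succ t)
  · exact .rule1 v hv h

lemma ZqWinFrom.of_union_s11 {D : Set V} (hD : D.Finite) (h : ZqWinFrom G q (F ∪ D) t) :
    ZqWinFrom G q F (t + D.ncard) := by
  induction D, hD using Set.Finite.induction_on generalizing t with
  | empty => simpa using h
  | @insert a D ha hD ih =>
      rw [Set.union_insert] at h
      rw [Set.ncard_insert_of_notMem ha hD, ← Nat.add_assoc, Nat.add_right_comm]
      exact ih h.of_insert

lemma ZqWinFrom.of_compl_singleton {u v : V} (huv : G.Adj u v) : ZqWinFrom G q {v}ᶜ t := by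
  refine .rule2 u v
    ⟨trivial, trivial, huv.ne, by simp, huv, fun w _ _ hw => by simpa using hw⟩ ?_
  rw [Set.insert_eq, Set.union_compl_self]
  exact .done t

lemma forceIn.subset_insert {u v : V} {S : Set V} (h : forceIn G Set.univ F u v)
    (hS : ∀ w ∈ S, w ∉ F → G.Adj u w) : S ⊆ insert v F := by
  intro w hw
  by_cases hwF : w ∈ F
  · exact Set.mem_insert_of_mem v hwF
  · exact h.2.2.2.2.2 w trivial (hS w hw hwF) hwF ▸ Set.mem_insert w F

lemma reachAvoid_symm {v w : V} (h : reachAvoid G F v w) : reachAvoid G F w v :=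
  (@Relation.ReflTransGen.stdSymm _ _ ⟨fun _ _ hab => ⟨hab.1.symm, hab.2.2, hab.2.1⟩⟩).symm _ _ h

lemma reachAvoid_eq_of_forall_adj_mem {v w : V} (hv : ∀ x, G.Adj v x → x ∈ F)
    (h : reachAvoid G F v w) : w = v := by
  rcases Relation.ReflTransGen.cases_head h with rfl | ⟨x, ⟨hvx, -, hx⟩, -⟩
  · rfl
  · exact absurd (hv x hvx) hx

lemma unfilledComponents_subsingleton_of_forall_adj {c : V} (hc : c ∉ F)
    (hadj : ∀ w, w ≠ c → G.Adj c w) : (unfilledComponents G F).Subsingleton := by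
  have hreach : ∀ v, v ∉ F → reachAvoid G F v c := fun v hv => by
    by_cases hvc : v = c
    · exact hvc ▸ Relation.ReflTransGen.refl
    · exact .single ⟨(hadj v hvc).symm, hv, hc⟩
  rintro _ ⟨v₁, hv₁, rfl⟩ _ ⟨v₂, hv₂, rfl⟩
  ext w
  exact ⟨fun h => ((hreach v₂ hv₂).trans (reachAvoid_symm (hreach v₁ hv₁))).trans h,
    fun h => ((hreach v₁ hv₁).trans (reachAvoid_symm (hreach v₂ hv₂))).trans h⟩

lemma ncard_compl_insert_add_one [Finite V] {v : V} (hv : v ∉ F) :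
    (insert v F)ᶜ.ncard + 1 = Fᶜ.ncard := by
  rw [Set.insert_eq, Set.compl_union, ← Set.sdiff_eq_compl_inter]
  exact Set.ncard_sdiff_singleton_add_one hv

theorem ZqWinFrom.ncard_compl_le [Finite V] (β : Set V → ℕ)
    (hinsert : ∀ F v, β (insert v F) ≤ β F)
    (hforce : ∀ F u v, forceIn G Set.univ F u v → β (insert v F) + 1 ≤ β F)
    (hrule3 : ∀ F (𝒞 : Set (Set V)), 𝒞 ⊆ unfilledComponents G F → q + 1 ≤ 𝒞.ncard →
      ∀ F', ¬ rule3Step G (F ∪ ⋃₀ 𝒞) F F')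
    (h : ZqWinFrom G q F t) : Fᶜ.ncard ≤ t + β F := by
  induction h with
  | done => simp
  | @rule1 F t v hv _ ih =>
      have := ncard_compl_insert_add_one hv
      have := hinsert F v
      omega
  | @rule2 F t u v huv _ ih =>
      have := ncard_compl_insert_add_one huv.2.2.2.1
      have := hforce F u v huv
      omega
  | @rule3 F t 𝒞 h𝒞 hcard next hnext _ ih =>
      have h𝒞ne : 𝒞.Nonempty := Set.nonempty_of_ncard_ne_zero (by omega)
      have hstay : next 𝒞 le_rfl h𝒞ne = F := by
        rcases Relation.ReflTransGen.cases_head (hnext 𝒞 le_rfl h𝒞ne) with h | ⟨F', hF', -⟩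
        · exact h.symm
        · exact absurd hF' (hrule3 F 𝒞 h𝒞 hcard F')
      simpa [hstay] using ih 𝒞 le_rfl h𝒞ne

end Game

section Windmill

variable {η l : ℕ}

lemma windmillI_one_not_adj_inl (p p' : Fin η × Fin 1) :
    ¬ (windmillI η 1 l).Adj (.inl p) (.inl p') := by
  obtain ⟨i, x⟩ := p
  obtain ⟨i', x'⟩ := p'
  simp only [windmillI, SimpleGraph.fromRel_adj, Subsingleton.elim x x']
  rintro ⟨hne, rfl | rfl⟩ <;> exact hne rfl

lemma windmillI_adj_inl_inr (p : Fin η × Fin 1) (j : Fin l) :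
    (windmillI η 1 l).Adj (.inl p) (.inr j) := by
  simp [windmillI]

lemma windmillI_adj_inr (i : Fin l) {w : (Fin η × Fin 1) ⊕ Fin l} (hw : w ≠ .inr i) :
    (windmillI η 1 l).Adj (.inr i) w := by
  rcases w with p | j
  · exact (windmillI_adj_inl_inr p i).symm
  · simpa [windmillI, eq_comm] using hw

open Classical in
noncomputable def windmillPotential {α β : Type*} (F : Set (α ⊕ β)) : ℕ :=
  (if ∀ j, .inr j ∈ F then 0 else 1) + (if F = Set.univ then 0 else 1)

lemma windmillPotential_insert_le {α β : Type*} (F : Set (α ⊕ β)) (v : α ⊕ β) :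
    windmillPotential (insert v F) ≤ windmillPotential F := by
  unfold windmillPotential
  have h₁ : (∀ j, .inr j ∈ F) → ∀ j, .inr j ∈ insert v F := fun h j => .inr (h j)
  have h₂ : F = Set.univ → insert v F = Set.univ := fun h => by
    rw [h, Set.insert_eq_of_mem (Set.mem_univ v)]
  split_ifs <;> simp_all

lemma windmillPotential_forceIn {F : Set ((Fin η × Fin 1) ⊕ Fin l)} {u v}
    (h : forceIn (windmillI η 1 l) Set.univ F u v) :
    windmillPotential (insert v F) + 1 ≤ windmillPotential F := by
  obtain ⟨-, -, huF, hvF, hadj, -⟩ := id h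
  have hF : F ≠ Set.univ := fun hF => hvF (hF ▸ Set.mem_univ v)
  unfold windmillPotential
  rcases u with p | i
  · obtain ⟨j, rfl⟩ : ∃ j, v = .inr j := by
      rcases v with p' | j
      · exact absurd hadj (windmillI_one_not_adj_inl p p')
      · exact ⟨j, rfl⟩
    have hcentral : ∀ j', .inr j' ∈ insert (.inr j) F := fun j' =>
      h.subset_insert (S := Set.range .inr)
        (fun _ ⟨j'', hj''⟩ _ => hj'' ▸ windmillI_adj_inl_inr p j'') ⟨j', rfl⟩
    have hj : ¬ ∀ j', .inr j' ∈ F := fun hF' => hvF (hF' j)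
    simp only [hcentral, hj, hF, implies_true, if_true, if_false]
    split_ifs <;> omega
  · have hall : insert v F = Set.univ := Set.univ_subset_iff.mp <|
      h.subset_insert fun w _ hw => windmillI_adj_inr i fun hwi => hw (hwi ▸ huF)
    simp [hall, hF]

lemma windmillI_one_not_rule3Step {F F' : Set ((Fin η × Fin 1) ⊕ Fin l)} {𝒞}
    (h𝒞 : 𝒞 ⊆ unfilledComponents (windmillI η 1 l) F) (hcard : 2 ≤ 𝒞.ncard) :
    ¬ rule3Step (windmillI η 1 l) (F ∪ ⋃₀ 𝒞) F F' := by
  have hcentral : ∀ j, .inr j ∈ F := by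
    by_contra! ⟨j, hj⟩
    have := Set.ncard_le_one_iff_subsingleton.mpr <|
      (unfilledComponents_subsingleton_of_forall_adj hj fun _ hw => windmillI_adj_inr j hw).anti h𝒞
    omega
  have hleaf : ∀ C ∈ 𝒞, ∃ p, C = {.inl p} ∧ .inl p ∉ F := by
    intro C hC
    obtain ⟨p | j, hv, rfl⟩ := h𝒞 hC
    · refine ⟨p, Set.ext fun w => ⟨reachAvoid_eq_of_forall_adj_mem ?_, ?_⟩, hv⟩
      · rintro (p' | j) hadj
        · exact absurd hadj (windmillI_one_not_adj_inl p p')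
        · exact hcentral j
      · rintro rfl
        exact Relation.ReflTransGen.refl
    · exact absurd (hcentral j) hv
  rintro ⟨u, v, ⟨-, -, huF, hvF, hadj, huniq⟩, -⟩
  obtain ⟨C₁, C₂, hC₁, hC₂, hne⟩ := (Set.one_lt_ncard_iff (Set.toFinite 𝒞)).mp hcard
  obtain ⟨p₁, rfl, hp₁⟩ := hleaf C₁ hC₁
  obtain ⟨p₂, rfl, hp₂⟩ := hleaf C₂ hC₂
  rcases u with p | i
  · rcases v with p' | j
    · exact windmillI_one_not_adj_inl p p' hadj
    · exact hvF (hcentral j)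
  · have h₁ := huniq (.inl p₁) (.inr ⟨_, hC₁, rfl⟩) (windmillI_adj_inr i (by simp)) hp₁
    have h₂ := huniq (.inl p₂) (.inr ⟨_, hC₂, rfl⟩) (windmillI_adj_inr i (by simp)) hp₂
    exact hne (by rw [h₁, h₂])

lemma windmillI_one_le_of_zqWinFrom_empty {q t : ℕ} (hq : 1 ≤ q)
    (h : ZqWinFrom (windmillI η 1 l) q ∅ t) : η + l ≤ t + 2 := by
  have hbound := h.ncard_compl_le windmillPotential windmillPotential_insert_le
    (fun _ _ _ => windmillPotential_forceIn)
    (fun _ _ h𝒞 hcard _ => windmillI_one_not_rule3Step h𝒞 (by omega))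
  have hpot : windmillPotential (∅ : Set ((Fin η × Fin 1) ⊕ Fin l)) ≤ 2 := by
    unfold windmillPotential
    split_ifs <;> omega
  simp only [Set.compl_empty, Set.ncard_univ, Nat.card_eq_fintype_card, Fintype.card_sum,
    Fintype.card_prod, Fintype.card_fin, mul_one] at hbound
  omega

lemma windmillI_one_zqWinFrom_empty {q : ℕ} (hη : 2 ≤ η) (hl : 1 ≤ l) :
    ZqWinFrom (windmillI η 1 l) q ∅ (η + l - 2) := by
  set x₀ : (Fin η × Fin 1) ⊕ Fin l := .inl (⟨0, by omega⟩, 0)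
  set x₁ : (Fin η × Fin 1) ⊕ Fin l := .inl (⟨1, by omega⟩, 0)
  set c : (Fin η × Fin 1) ⊕ Fin l := .inr ⟨0, by omega⟩
  have hx₀x₁ : x₀ ≠ x₁ := by simp [x₀, x₁]
  have hx₀c : x₀ ≠ c := by simp [x₀, c]
  have hwin : ZqWinFrom (windmillI η 1 l) q {x₀, c}ᶜ 0 := by
    refine .rule2 x₁ c ⟨trivial, trivial, by simp [hx₀x₁.symm, x₁, c], by simp,
      windmillI_adj_inl_inr _ _, fun w _ hadj hw => ?_⟩ ?_
    · rw [Set.mem_compl_iff, not_not, Set.mem_insert_iff, Set.mem_singleton_iff] at hw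
      rcases hw with rfl | rfl
      · exact absurd hadj (windmillI_one_not_adj_inl _ _)
      · rfl
    · have : insert c ({x₀, c}ᶜ : Set _) = {x₀}ᶜ := by
        ext w
        by_cases hw : w = c <;> simp [hw, hx₀c.symm]
      rw [this]
      exact .of_compl_singleton (windmillI_adj_inl_inr _ ⟨0, by omega⟩).symm
  have hcard : ({x₀, c}ᶜ : Set ((Fin η × Fin 1) ⊕ Fin l)).ncard = η + l - 2 := by
    rw [Set.ncard_compl, Set.ncard_pair hx₀c]
    simp
  rw [← Set.empty_union {x₀, c}ᶜ] at hwin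
  simpa [hcard] using hwin.of_union_s11 (Set.toFinite _)

end Windmill

/-- for `η ≥ 2`, `l ≥ 1` and `q ≥ 1`, `Z_q(W'(η,1,l)) = l + η - 2`. -/
theorem stmt11 (η l : ℕ) (hη : 2 ≤ η) (hl : 1 ≤ l) (q : ℕ) (hq : 1 ≤ q) :
    qZeroForcingNumber (windmillI η 1 l) q = l + η - 2 := by
  have hwin : l + η - 2 ∈ {t | ZqWinFrom (windmillI η 1 l) q ∅ t} := by
    simpa [Nat.add_comm l η] using windmillI_one_zqWinFrom_empty (q := q) hη hl
  refine le_antisymm (Nat.sInf_le hwin) (le_csInf ⟨_, hwin⟩ fun t ht => ?_)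
  have := windmillI_one_le_of_zqWinFrom_empty hq ht
  omega

end ZqForcing
end
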